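/- arXiv:1904.00820 — 2 statements merged into one kernel-verified Lean document; each statement's English description precedes it below -/
import Mathlib

section
/- For a convex TU game, the marginal-contribution vector associated with any ordering of the players lies in the core: given a bijection π : Fin |N| → N, define x_{π(i)} = v({π(0),…,π(i)}) − v({π(0),…,π(i−1)}); then x is group rational and satisfies Σ_{n∈S} x_n ≥ v(S) for every coalition S. -/
/-!
Let `m` be the member of a coalition `S` that comes last in the ordering `π`. Then `S \ {m}` is
contained in the set of predecessors of `m`, so convexity gives `v S - v (S \ {m}) ≤ x m`; removing
the last member repeatedly yields `v S ≤ ∑ n ∈ S, x n`. Efficiency is a telescoping sum along `π`.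
-/

open Finset

theorem Fin.sum_Iic_sub_Iio {M : Type*} [AddCommGroup M] {k : ℕ} (F : Finset (Fin k) → M) :
    ∑ i, (F (Iic i) - F (Iio i)) = F univ - F ∅ := by
  set G : ℕ → M := fun j => F (univ.filter fun i : Fin k => (i : ℕ) < j)
  have hIic (i : Fin k) : Iic i = univ.filter fun i' : Fin k => (i' : ℕ) < i + 1 := by
    ext; simp only [mem_Iic, mem_filter, mem_univ, true_and, Nat.lt_succ_iff, Fin.le_def]
  have hIio (i : Fin k) : Iio i = univ.filter fun i' : Fin k => (i' : ℕ) < i := by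
    ext; simp only [mem_Iio, mem_filter, mem_univ, true_and, Fin.lt_def]
  calc ∑ i : Fin k, (F (Iic i) - F (Iio i)) = ∑ i : Fin k, (G (i + 1) - G i) := by
        simp only [hIic, hIio, G]
    _ = F univ - F ∅ := by
        rw [Fin.sum_univ_eq_sum_range (fun j => G (j + 1) - G j), sum_range_sub]
        simp [G]

section MarginalVector

variable {N α : Type*} [DecidableEq N]

theorem le_sum_of_forall_exists_sub_erase_le {v : Finset N → ℝ} {x : N → ℝ} (h0 : v ∅ = 0)
    (hstep : ∀ S : Finset N, S.Nonempty → ∃ m ∈ S, v S - v (S.erase m) ≤ x m)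
    (S : Finset N) : v S ≤ ∑ n ∈ S, x n := by
  induction S using Finset.strongInduction with
  | _ S ih =>
    rcases S.eq_empty_or_nonempty with rfl | hS
    · simp [h0]
    obtain ⟨m, hm, hxm⟩ := hstep S hS
    have hrest := ih (S.erase m) (erase_ssubset hm)
    rw [← add_sum_erase S x hm]
    linarith

section Ordering

variable [LinearOrder α] [LocallyFiniteOrderBot α] (π : α ≃ N)

theorem Equiv.image_Iic_symm (m : N) :
    (Iic (π.symm m)).image π = insert m ((Iio (π.symm m)).image π) := by
  rw [← Iio_insert, image_insert, π.apply_symm_apply]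

theorem Equiv.notMem_image_Iio_symm (m : N) : m ∉ (Iio (π.symm m)).image π := by
  simp only [mem_image, mem_Iio, not_exists, not_and]
  exact fun i hi h => hi.ne (π.eq_symm_apply.2 h)

theorem Equiv.erase_subset_image_Iio_symm {S : Finset N} {m : N}
    (hmax : ∀ n ∈ S, π.symm n ≤ π.symm m) : S.erase m ⊆ (Iio (π.symm m)).image π := by
  intro n hn
  obtain ⟨hnm, hnS⟩ := mem_erase.1 hn
  refine mem_image.2 ⟨π.symm n, mem_Iio.2 ((hmax n hnS).lt_of_ne ?_), π.apply_symm_apply n⟩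
  exact π.symm.injective.ne hnm

end Ordering

def marginalVector [Preorder α] [LocallyFiniteOrderBot α] (v : Finset N → ℝ) (π : α ≃ N)
    (n : N) : ℝ :=
  v ((Iic (π.symm n)).image π) - v ((Iio (π.symm n)).image π)

theorem sum_marginalVector [Fintype N] {k : ℕ} (v : Finset N → ℝ) (π : Fin k ≃ N) :
    ∑ n, marginalVector v π n = v univ - v ∅ := by
  rw [← π.sum_comp]
  simpa only [marginalVector, π.symm_apply_apply, image_univ_equiv, image_empty]
    using Fin.sum_Iic_sub_Iio (fun s => v (s.image π))

def IsConvexGame [Fintype N] (v : Finset N → ℝ) : Prop :=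
  ∀ (n : N) (S1 S2 : Finset N), S1 ⊆ S2 → S2 ⊆ univ \ {n} →
    v (insert n S1) - v S1 ≤ v (insert n S2) - v S2

namespace IsConvexGame

variable [Fintype N] {v : Finset N → ℝ} [LinearOrder α] [LocallyFiniteOrderBot α]

theorem sub_erase_le_marginalVector (hv : IsConvexGame v) (π : α ≃ N) {S : Finset N} {m : N}
    (hm : m ∈ S) (hmax : ∀ n ∈ S, π.symm n ≤ π.symm m) :
    v S - v (S.erase m) ≤ marginalVector v π m := by
  have h := hv m (S.erase m) _ (π.erase_subset_image_Iio_symm hmax)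
    (subset_sdiff.2 ⟨subset_univ _, disjoint_singleton_right.2 (π.notMem_image_Iio_symm m)⟩)
  rwa [insert_erase hm, ← π.image_Iic_symm] at h

theorem le_sum_marginalVector (hv : IsConvexGame v) (h0 : v ∅ = 0) (π : α ≃ N)
    (S : Finset N) : v S ≤ ∑ n ∈ S, marginalVector v π n := by
  refine le_sum_of_forall_exists_sub_erase_le h0 (fun S hS => ?_) S
  obtain ⟨m, hm, hmax⟩ := S.exists_max_image π.symm hS
  exact ⟨m, hm, hv.sub_erase_le_marginalVector π hm hmax⟩

end IsConvexGame

end MarginalVector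

/-- For a convex TU game, every marginal-contribution vector lies in the core. -/
theorem marginal_vector_in_core {N : Type*} [Fintype N] [DecidableEq N]
    (v : Finset N → ℝ) (h0 : v ∅ = 0)
    (hconv : ∀ (n : N) (S1 S2 : Finset N), S1 ⊆ S2 → S2 ⊆ Finset.univ \ {n} →
      v (insert n S1) - v S1 ≤ v (insert n S2) - v S2)
    (π : Fin (Fintype.card N) ≃ N) (x : N → ℝ)
    (hx : ∀ n : N, x n = v ((Finset.Iic (π.symm n)).image π) -
                    v ((Finset.Iio (π.symm n)).image π)) :
    (∑ n, x n = v Finset.univ) ∧ (∀ S : Finset N, ∑ n ∈ S, x n ≥ v S) := by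
  obtain rfl : x = marginalVector v π := funext hx
  refine ⟨?_, IsConvexGame.le_sum_marginalVector hconv h0 π⟩
  rw [sum_marginalVector, h0, sub_zero]
end

section
/- Every convex TU game has a non-empty core. -/
/-!
Fix any ordering of the players and pay each player its marginal contribution to the coalition
of its predecessors. These payments telescope to `v N`. For a coalition `S`, build `S` up by
adding its members in the same order: each step adds a player to a subset of its predecessors,
so by convexity it gains at most that player's payment, hence `v S` is at most the total payment
to `S`.
-/

namespace TUGame

open Finset

variable {N : Type*} [Fintype N]

def IsConvexGame [DecidableEq N] (v : Finset N → ℝ) : Prop :=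
  ∀ i S T, S ⊆ T → i ∉ T → v (insert i S) - v S ≤ v (insert i T) - v T

def core (v : Finset N → ℝ) : Set (N → ℝ) :=
  {x | ∑ i, x i = v univ ∧ ∀ S, v S ≤ ∑ i ∈ S, x i}

section MarginalVector

variable [LinearOrder N]

lemma eq_filter_lt_of_isLowerSet_insert {s : Finset N} {a : N} (hs : ∀ x ∈ s, x < a)
    (hlower : IsLowerSet (insert a s : Set N)) : s = ({j | j < a} : Finset N) := by
  ext j
  simp only [mem_filter, mem_univ, true_and]
  refine ⟨hs j, fun hj => ?_⟩
  have : j ∈ (insert a s : Set N) := hlower hj.le (Set.mem_insert a _)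
  exact (Set.mem_insert_iff.mp this).resolve_left hj.ne

variable [DecidableEq N]

def marginalVector (v : Finset N → ℝ) (i : N) : ℝ :=
  v (insert i ({j | j < i} : Finset N)) - v {j | j < i}

variable {v : Finset N → ℝ}

theorem sum_marginalVector_of_isLowerSet (hv0 : v ∅ = 0) {S : Finset N}
    (hS : IsLowerSet (S : Set N)) : ∑ i ∈ S, marginalVector v i = v S := by
  induction S using Finset.induction_on_max with
  | empty => simp [hv0]
  | insert a s hs ih =>
    rw [coe_insert] at hS
    obtain rfl := eq_filter_lt_of_isLowerSet_insert hs hS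
    have hlower : IsLowerSet ({j | j < a} : Set N) := fun _ _ hle hlt => hle.trans_lt hlt
    rw [sum_insert (by simp), ih (by simpa using hlower), marginalVector]
    ring

theorem le_sum_marginalVector (hv0 : v ∅ = 0) (hv : IsConvexGame v) (S : Finset N) :
    v S ≤ ∑ i ∈ S, marginalVector v i := by
  induction S using Finset.induction_on_max with
  | empty => simp [hv0]
  | insert a s hs ih =>
    have hmarg : v (insert a s) - v s ≤ marginalVector v a :=
      hv a s ({j | j < a} : Finset N) (fun j hj => by simpa using hs j hj) (by simp)
    rw [sum_insert fun ha => (hs a ha).false]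
    linarith

theorem marginalVector_mem_core (hv0 : v ∅ = 0) (hv : IsConvexGame v) :
    marginalVector v ∈ core v :=
  ⟨sum_marginalVector_of_isLowerSet hv0 (by simpa using isLowerSet_univ),
    le_sum_marginalVector hv0 hv⟩

end MarginalVector

end TUGame

theorem convex_game_core_nonempty_general {N : Type*} [Fintype N] [DecidableEq N]
    (v : Finset N → ℝ) (h0 : v ∅ = 0)
    (hconv : ∀ (n : N) (S1 S2 : Finset N), S1 ⊆ S2 → S2 ⊆ Finset.univ \ {n} →
      v (insert n S1) - v S1 ≤ v (insert n S2) - v S2) :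
    ∃ x : N → ℝ, (∑ n, x n = v Finset.univ) ∧ (∀ S : Finset N, ∑ n ∈ S, x n ≥ v S) := by
  have hv : TUGame.IsConvexGame v := fun i S T hST hi =>
    hconv i S T hST fun j hj => by simpa using ne_of_mem_of_not_mem hj hi
  let _ : LinearOrder N := LinearOrder.lift' _ (Fintype.equivFin N).injective
  exact ⟨_, TUGame.marginalVector_mem_core h0 hv⟩

/-- Every convex TU game has a non-empty core. -/
theorem convex_game_core_nonempty {N : Type*} [Fintype N] [DecidableEq N] [Nonempty N]
    (v : Finset N → ℝ) (h0 : v ∅ = 0)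
    (hconv : ∀ (n : N) (S1 S2 : Finset N), S1 ⊆ S2 → S2 ⊆ Finset.univ \ {n} →
      v (insert n S1) - v S1 ≤ v (insert n S2) - v S2) :
    ∃ x : N → ℝ, (∑ n, x n = v Finset.univ) ∧ (∀ S : Finset N, ∑ n ∈ S, x n ≥ v S) :=
  convex_game_core_nonempty_general v h0 hconv
end
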